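/- arXiv:0906.0121 — 5 statements merged into one kernel-verified Lean document; each statement's English description precedes it below -/
import Mathlib

section
/- Let g be a finite-dimensional real Lie algebra whose Killing form κ is negative definite. Let h′ ⊆ h be Lie subalgebras of g, let p = {x ∈ g : κ(x,y) = 0 ∀y ∈ h} and p′ = {x ∈ g : κ(x,y) = 0 ∀y ∈ h′} be their κ-orthogonal complements, and assume the decomposition relative to h is symmetric, i.e. ⁅p, p⁆ ⊆ h. If there exist x ∈ p and y ∈ p′ ∩ h with ⁅x, y⁆ ≠ 0, then the decomposition relative to h′ is not symmetric, i.e. ⁅p′, p′⁆ ⊄ h′. (In other words, a symmetric orthogonal decomposition forces the subalgebra to be maximal among subalgebras admitting symmetric decompositions.) -/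
open LieModule in
theorem LieSubalgebra.traceForm_lie_eq_zero {R L M : Type*} [CommRing R] [LieRing L]
    [LieAlgebra R L] [AddCommGroup M] [Module R M] [LieRingModule L M] [LieModule R L M]
    (h : LieSubalgebra R L) {x y : L} (hx : ∀ z ∈ h, traceForm R L M x z = 0) (hy : y ∈ h) :
    ∀ z ∈ h, traceForm R L M ⁅x, y⁆ z = 0 := fun z hz => by
  rw [traceForm_apply_lie_apply]
  exact hx _ (h.lie_mem hy hz)

theorem symmetric_decomposition_maximal_general
    (g : Type*) [LieRing g] [LieAlgebra ℝ g]
    (hneg : ∀ x : g, x ≠ 0 → killingForm ℝ g x x < 0)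
    (h h' : LieSubalgebra ℝ g) (hsub : h' ≤ h)
    (p p' : Set g)
    (hp : p = {x : g | ∀ y ∈ h, killingForm ℝ g x y = 0})
    (hp' : p' = {x : g | ∀ y ∈ h', killingForm ℝ g x y = 0})
    (x y : g) (hx : x ∈ p) (hy : y ∈ p' ∩ (h : Set g)) (hxy : ⁅x, y⁆ ≠ (0 : g)) :
    ¬ (∀ a ∈ p', ∀ b ∈ p', ⁅a, b⁆ ∈ h') := by
  intro hsym'
  subst hp hp'
  obtain ⟨hyp', hyh⟩ := hy
  have hxp' : ∀ z ∈ h', killingForm ℝ g x z = 0 := fun z hz => hx z (hsub hz)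
  have hxy_mem_h : ⁅x, y⁆ ∈ h := hsub (hsym' x hxp' y hyp')
  have hxy_orth_h : ∀ z ∈ h, killingForm ℝ g ⁅x, y⁆ z = 0 := h.traceForm_lie_eq_zero hx hyh
  exact (hneg _ hxy).ne (hxy_orth_h _ hxy_mem_h)

/-- In a compact real Lie algebra (Killing form negative definite),
a symmetric orthogonal decomposition `g = h ⊕ p` (with `⁅p,p⁆ ⊆ h`) forces maximality:
if `h' ⊆ h` is a smaller subalgebra and there are `x ∈ p`, `y ∈ p' ∩ h` with
`⁅x,y⁆ ≠ 0`, then the decomposition relative to `h'` is not symmetric. -/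
theorem symmetric_decomposition_maximal
    (g : Type*) [LieRing g] [LieAlgebra ℝ g] [Module.Finite ℝ g]
    (hneg : ∀ x : g, x ≠ 0 → killingForm ℝ g x x < 0)
    (h h' : LieSubalgebra ℝ g) (hsub : h' ≤ h)
    (p p' : Set g)
    (hp : p = {x : g | ∀ y ∈ h, killingForm ℝ g x y = 0})
    (hp' : p' = {x : g | ∀ y ∈ h', killingForm ℝ g x y = 0})
    (hsym : ∀ a ∈ p, ∀ b ∈ p, ⁅a, b⁆ ∈ h)
    (x y : g) (hx : x ∈ p) (hy : y ∈ p' ∩ (h : Set g)) (hxy : ⁅x, y⁆ ≠ (0 : g)) :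
    ¬ (∀ a ∈ p', ∀ b ∈ p', ⁅a, b⁆ ∈ h') :=
  symmetric_decomposition_maximal_general g hneg h h' hsub p p' hp hp' x y hx hy hxy
end

section
/- Every element A of the special unitary group SU(2) (the group of 2×2 complex unitary matrices of determinant 1) can be written in Euler form: there exist φ ∈ [0, 2π], θ ∈ [0, π], ψ ∈ [0, 4π] such that A = exp(iφσ₃/2)·exp(iθσ₁/2)·exp(iψσ₃/2). -/
/-!
Unitarity and `det = 1` force every `A ∈ SU(2)` into Cayley–Klein form `!![a, b; -b̄, ā]` with
`|a|² + |b|² = 1`, while the Euler product is the Cayley–Klein matrix with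
`a = cos(θ/2) e^{i(φ+ψ)/2}` and `b = i sin(θ/2) e^{i(φ-ψ)/2}`. So `θ/2 = arccos |a|` fixes `θ`,
and `φ, ψ` only have to match the phases of `a` and `-i b`, which are determined modulo `2π`.
-/

open Matrix Complex

/-- The Pauli matrix σ₁. -/
def pauli1 : Matrix (Fin 2) (Fin 2) ℂ := !![0, 1; 1, 0]

/-- The Pauli matrix σ₃. -/
def pauli3 : Matrix (Fin 2) (Fin 2) ℂ := !![1, 0; 0, -1]

open ComplexConjugate
open scoped Real

def cayleyKlein (a b : ℂ) : Matrix (Fin 2) (Fin 2) ℂ := !![a, b; -conj b, conj a]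

lemma det_cayleyKlein (a b : ℂ) : (cayleyKlein a b).det = ((‖a‖ ^ 2 + ‖b‖ ^ 2 : ℝ) : ℂ) := by
  rw [cayleyKlein, det_fin_two_of, mul_neg, sub_neg_eq_add, mul_conj, mul_conj,
    Complex.sq_norm, Complex.sq_norm, ofReal_add]

lemma exists_cayleyKlein_eq {A : Matrix (Fin 2) (Fin 2) ℂ}
    (hA : A ∈ specialUnitaryGroup (Fin 2) ℂ) :
    ∃ a b : ℂ, ‖a‖ ^ 2 + ‖b‖ ^ 2 = 1 ∧ A = cayleyKlein a b := by
  obtain ⟨hU, hdet⟩ := mem_specialUnitaryGroup_iff.mp hA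
  -- `A⁻¹` is both `star A` (unitarity) and `adjugate A` (`det A = 1`).
  have hstar : star A = adjugate A := by
    rw [← inv_eq_left_inv (mem_unitaryGroup_iff'.mp hU), Matrix.inv_def, hdet]; simp
  rw [adjugate_fin_two, ← Matrix.ext_iff] at hstar
  have h00 : conj (A 0 0) = A 1 1 := by simpa using hstar 0 0
  have h10 : conj (A 0 1) = -A 1 0 := by simpa using hstar 1 0
  have hA : A = cayleyKlein (A 0 0) (A 0 1) := by
    rw [cayleyKlein, h00, h10, neg_neg]; exact eta_fin_two A
  refine ⟨_, _, ?_, hA⟩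
  rwa [hA, det_cayleyKlein, ofReal_eq_one] at hdet

lemma exp_smul_pauli3 (c : ℂ) :
    NormedSpace.exp (c • pauli3) = !![exp c, 0; 0, exp (-c)] := by
  have h : c • pauli3 = diagonal ![c, -c] := by
    ext i j; fin_cases i <;> fin_cases j <;> simp [pauli3]
  rw [h, exp_diagonal]
  ext i j; fin_cases i <;> fin_cases j <;> simp [← Complex.exp_eq_exp_ℂ]

lemma exp_smul_pauli1 (c : ℂ) :
    NormedSpace.exp (c • pauli1) = !![cosh c, sinh c; sinh c, cosh c] := by
  let H : Matrix (Fin 2) (Fin 2) ℂ := !![1, 1; 1, -1]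
  have hH : H * !![1/2, 1/2; 1/2, -1/2] = 1 := by
    rw [one_fin_two]; norm_num [H]
  have hconj : c • pauli1 = H * (c • pauli3) * H⁻¹ := by
    rw [inv_eq_right_inv hH]
    ext i j; fin_cases i <;> fin_cases j <;> simp [H, pauli1, pauli3] <;> ring
  rw [hconj, Matrix.exp_conj _ _ (IsUnit.of_mul_eq_one _ hH), exp_smul_pauli3,
    inv_eq_right_inv hH]
  ext i j; fin_cases i <;> fin_cases j <;> simp [H, cosh, sinh] <;> ring

lemma euler_product_eq_cayleyKlein (φ θ ψ : ℝ) :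
    NormedSpace.exp ((I * φ / 2) • pauli3) * NormedSpace.exp ((I * θ / 2) • pauli1) *
        NormedSpace.exp ((I * ψ / 2) • pauli3) =
      cayleyKlein (Real.cos (θ / 2) * exp (↑((φ + ψ) / 2) * I))
        (I * (Real.sin (θ / 2) * exp (↑((φ - ψ) / 2) * I))) := by
  have hcosh : cosh (I * θ / 2) = Real.cos (θ / 2) := by
    rw [show I * θ / 2 = ↑(θ / 2) * I by push_cast; ring, cosh_mul_I, ofReal_cos]
  have hsinh : sinh (I * θ / 2) = I * Real.sin (θ / 2) := by
    rw [show I * θ / 2 = ↑(θ / 2) * I by push_cast; ring, sinh_mul_I, ofReal_sin, mul_comm]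
  have hsum : exp (↑((φ + ψ) / 2) * I) = exp (I * φ / 2) * exp (I * ψ / 2) := by
    rw [← exp_add]; push_cast; ring_nf
  have hdiff : exp (↑((φ - ψ) / 2) * I) = exp (I * φ / 2) * exp (-(I * ψ / 2)) := by
    rw [← exp_add]; push_cast; ring_nf
  rw [exp_smul_pauli3, exp_smul_pauli1, exp_smul_pauli3, hcosh, hsinh, cayleyKlein]
  simp only [map_mul, ← exp_conj, conj_ofReal, conj_I]
  simp only [mul_neg, exp_neg, hsum, hdiff, mul_fin_two]
  ext i j; fin_cases i <;> fin_cases j <;> simp <;> ring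

lemma exists_cos_sin_half_eq {r s : ℝ} (hr : 0 ≤ r) (hs : 0 ≤ s) (h : r ^ 2 + s ^ 2 = 1) :
    ∃ θ ∈ Set.Icc 0 π, Real.cos (θ / 2) = r ∧ Real.sin (θ / 2) = s := by
  have hθ : 2 * Real.arccos r / 2 = Real.arccos r := by ring
  refine ⟨2 * Real.arccos r, ⟨by linarith [Real.arccos_nonneg r], ?_⟩, ?_, ?_⟩
  · linarith [Real.arccos_le_pi_div_two.mpr hr]
  · rw [hθ, Real.cos_arccos (by linarith) (by nlinarith)]
  · rw [hθ, Real.sin_arccos, show 1 - r ^ 2 = s ^ 2 by linarith, Real.sqrt_sq hs]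

lemma exp_ofReal_mul_I_eq_of_eq_add_int_mul_two_pi {x y : ℝ} (n : ℤ)
    (h : x = y + n * (2 * π)) : exp (x * I) = exp (y * I) :=
  exp_eq_exp_iff_exists_int.mpr ⟨n, by rw [h]; push_cast; ring⟩

-- Reduce `φ ≡ α + β` modulo `2π` first; then `ψ ≡ 2α - φ` modulo `4π` also makes
-- `φ - ψ ≡ 2β` modulo `4π`, because `2φ ≡ 2(α + β)` modulo `4π`.
lemma exists_euler_angles (α β : ℝ) :
    ∃ φ ∈ Set.Icc 0 (2 * π), ∃ ψ ∈ Set.Icc 0 (4 * π),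
      exp (↑((φ + ψ) / 2) * I) = exp (α * I) ∧ exp (↑((φ - ψ) / 2) * I) = exp (β * I) := by
  have h4π : 0 < 4 * π := by positivity
  set φ := toIcoMod Real.two_pi_pos 0 (α + β)
  set ψ := toIcoMod h4π 0 (2 * α - φ)
  have hk := self_sub_toIcoMod_eq_mul Real.two_pi_pos 0 (α + β)
  have hn := self_sub_toIcoMod_eq_mul h4π 0 (2 * α - φ)
  refine ⟨φ, Set.Ico_subset_Icc_self (by simpa using toIcoMod_mem_Ico Real.two_pi_pos 0 (α + β)),
    ψ, Set.Ico_subset_Icc_self (by simpa using toIcoMod_mem_Ico h4π 0 (2 * α - φ)),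
    exp_ofReal_mul_I_eq_of_eq_add_int_mul_two_pi (-toIcoDiv h4π 0 (2 * α - φ)) ?_,
    exp_ofReal_mul_I_eq_of_eq_add_int_mul_two_pi
      (toIcoDiv h4π 0 (2 * α - φ) - toIcoDiv Real.two_pi_pos 0 (α + β)) ?_⟩
  · push_cast; linear_combination -hn / 2
  · push_cast; linear_combination hn / 2 - hk

/-- Every element of `SU(2)` admits Euler angles
`φ ∈ [0,2π]`, `θ ∈ [0,π]`, `ψ ∈ [0,4π]` with
`A = exp(iφσ₃/2)·exp(iθσ₁/2)·exp(iψσ₃/2)`. -/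
theorem su2_euler_surjective (A : Matrix.specialUnitaryGroup (Fin 2) ℂ) :
    ∃ φ ∈ Set.Icc (0 : ℝ) (2 * Real.pi),
      ∃ θ ∈ Set.Icc (0 : ℝ) Real.pi,
        ∃ ψ ∈ Set.Icc (0 : ℝ) (4 * Real.pi),
          (A : Matrix (Fin 2) (Fin 2) ℂ) =
            NormedSpace.exp ((Complex.I * (φ : ℂ) / 2) • pauli3) *
              NormedSpace.exp ((Complex.I * (θ : ℂ) / 2) • pauli1) *
              NormedSpace.exp ((Complex.I * (ψ : ℂ) / 2) • pauli3) := by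
  obtain ⟨a, b, hab, hA⟩ := exists_cayleyKlein_eq A.2
  obtain ⟨θ, hθ, hcos, hsin⟩ := exists_cos_sin_half_eq (norm_nonneg a) (norm_nonneg b) hab
  obtain ⟨φ, hφ, ψ, hψ, hsum, hdiff⟩ := exists_euler_angles (arg a) (arg (-I * b))
  refine ⟨φ, hφ, θ, hθ, ψ, hψ, ?_⟩
  have hb : I * (‖b‖ * exp (arg (-I * b) * I)) = b := by
    rw [show ‖b‖ = ‖-I * b‖ by simp, norm_mul_exp_arg_mul_I]
    linear_combination (-b) * I_sq
  rw [hA, euler_product_eq_cayleyKlein, hcos, hsin, hsum, hdiff, norm_mul_exp_arg_mul_I, hb]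
end

section
/- If 0 < x₇ < π/6 and 3x₇ < x₈ < π/2, then f(2x₇, 2x₈) > 0, where f(α,β) = sin((β−α)/2)·sin((β+α)/2)·sin((β−3α)/2)·sin((β+3α)/2)·sin α·sin β. (Hence the region 0 ≤ x₇ ≤ π/6, 3x₇ ≤ x₈ ≤ π/2 is a fundamental region where the G₂ Haar-measure density is positive.) -/
open Real

theorem g2_weight_pos_on_fundamental_region_general (x₇ x₈ : ℝ)
    (h₁ : 0 < x₇) (h₃ : 3 * x₇ < x₈) (h₄ : x₈ < π / 2) :
    sin ((2 * x₈ - 2 * x₇) / 2) * sin ((2 * x₈ + 2 * x₇) / 2) *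
        sin ((2 * x₈ - 3 * (2 * x₇)) / 2) * sin ((2 * x₈ + 3 * (2 * x₇)) / 2) *
        sin (2 * x₇) * sin (2 * x₈) > 0 := by
  refine mul_pos (mul_pos (mul_pos (mul_pos (mul_pos ?_ ?_) ?_) ?_) ?_) ?_ <;>
    exact sin_pos_of_pos_of_lt_pi (by linarith) (by linarith)

/-- On the fundamental region `0 < x₇ < π/6`, `3x₇ < x₈ < π/2`,
the `G₂` Haar-measure density `f(2x₇, 2x₈)` is strictly positive, where
`f(α,β) = sin((β−α)/2)·sin((β+α)/2)·sin((β−3α)/2)·sin((β+3α)/2)·sin α·sin β`. -/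
theorem g2_weight_pos_on_fundamental_region (x₇ x₈ : ℝ)
    (h₁ : 0 < x₇) (h₂ : x₇ < π / 6) (h₃ : 3 * x₇ < x₈) (h₄ : x₈ < π / 2) :
    sin ((2 * x₈ - 2 * x₇) / 2) * sin ((2 * x₈ + 2 * x₇) / 2) *
        sin ((2 * x₈ - 3 * (2 * x₇)) / 2) * sin ((2 * x₈ + 3 * (2 * x₇)) / 2) *
        sin (2 * x₇) * sin (2 * x₈) > 0 :=
  g2_weight_pos_on_fundamental_region_general x₇ x₈ h₁ h₃ h₄
end

section
/- The volume of the compact Lie group G₂ computed from the SO(4)-Euler parametrization equals 9√3·π⁸/20; concretely, the iterated integral ∫₀^{2π}dx₁ ∫₀^{π/4}dx₂ ∫₀^{π}dx₃ ∫₀^{π}dx₄ ∫₀^{π/2}dx₅ ∫₀^{π/2}dx₆ ∫₀^{π/6}dx₇ ∫_{3x₇}^{π/2}dx₈ ∫₀^{2π}dx₉ ∫₀^{π/2}dx₁₀ ∫₀^{π}dx₁₁ ∫₀^{π}dx₁₂ ∫₀^{π/2}dx₁₃ ∫₀^{π}dx₁₄ of 27√3·f(2x₇,2x₈)·sin(2x₂)·sin(2x₅)·sin(2x₁₀)·sin(2x₁₃)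 equals 9√3·π⁸/20. -/
open Real

/-!
The integrand is a product of a constant, four factors `sin 2xᵢ` and `g2f (2x₇) (2x₈)`, so the
iterated integral factorises and all but the `(x₇, x₈)`-integral are elementary. By
product-to-sum, `g2f (2a) (2b) = ¼ sin 2a · sin 2b · (cos 2a - cos 2b) (cos 6a - cos 2b)`; the
substitution `u = cos 2b` makes the `x₈`-integral a polynomial in `cos 2a` (using
`cos 6a = 4 cos³ 2a - 3 cos 2a`), and the substitution `c = cos 2a` turns the `x₇`-integral into
a polynomial integral over `[1/2, 1]`, equal to `1/60`.
-/

/-- The weight function of the `G₂` Haar measure in the `SO(4)`-Euler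
parametrization. -/
noncomputable def g2f (α β : ℝ) : ℝ :=
  sin ((β - α) / 2) * sin ((β + α) / 2) * sin ((β - 3 * α) / 2) *
    sin ((β + 3 * α) / 2) * sin α * sin β

theorem integral_sin_two_mul_mul_comp_cos_two_mul {f F : ℝ → ℝ}
    (hF : ∀ u, HasDerivAt F (f u) u) (hf : Continuous f) (a b : ℝ) :
    ∫ x in a..b, sin (2 * x) * f (cos (2 * x)) = (F (cos (2 * a)) - F (cos (2 * b))) / 2 := by
  have hderiv : ∀ x ∈ Set.uIcc a b,
      HasDerivAt (fun y => -F (cos (2 * y)) / 2) (sin (2 * x) * f (cos (2 * x))) x := by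
    intro x _
    have hcos : HasDerivAt (fun y => cos (2 * y)) (-sin (2 * x) * 2) x :=
      ((hasDerivAt_id x).const_mul 2).cos.congr_deriv (by simp)
    refine (((hF (cos (2 * x))).comp x hcos).neg.div_const 2).congr_deriv ?_
    ring
  rw [intervalIntegral.integral_eq_sub_of_hasDerivAt hderiv
    (Continuous.intervalIntegrable (by fun_prop) _ _)]
  ring

theorem integral_sin_two_mul (a b : ℝ) :
    ∫ x in a..b, sin (2 * x) = (cos (2 * a) - cos (2 * b)) / 2 := by
  simpa using integral_sin_two_mul_mul_comp_cos_two_mul (f := fun _ => 1) (F := id)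
    (fun u => hasDerivAt_id u) continuous_const a b

theorem cos_two_mul_sub_cos_two_mul (p q : ℝ) :
    cos (2 * p) - cos (2 * q) = 2 * sin (q - p) * sin (q + p) := by
  rw [cos_sub_cos, show (2 * p + 2 * q) / 2 = q + p by ring,
    show (2 * p - 2 * q) / 2 = -(q - p) by ring, sin_neg]
  ring

theorem g2f_two_mul (a b : ℝ) :
    g2f (2 * a) (2 * b) = sin (2 * a) / 4 *
      (sin (2 * b) * ((cos (2 * a) - cos (2 * b)) * (cos (6 * a) - cos (2 * b)))) := by
  rw [g2f, show (2 * b - 2 * a) / 2 = b - a by ring, show (2 * b + 2 * a) / 2 = b + a by ring,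
    show (2 * b - 3 * (2 * a)) / 2 = b - 3 * a by ring,
    show (2 * b + 3 * (2 * a)) / 2 = b + 3 * a by ring, show 6 * a = 2 * (3 * a) by ring,
    cos_two_mul_sub_cos_two_mul, cos_two_mul_sub_cos_two_mul]
  ring

/-- The polynomial `∫ u in -1..T₃ c, (c - u) * (T₃ c - u)` with `T₃ c = 4c³ - 3c`, so that
`T₃ (cos 2a) = cos 6a`. -/
noncomputable def g2InnerPoly (c : ℝ) : ℝ :=
  1 / 3 - c - 3 * c ^ 2 + 11 * c ^ 3 + 4 * c ^ 4 - 30 * c ^ 5 + 32 * c ^ 7 - 32 / 3 * c ^ 9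

theorem integral_g2f_two_mul_right (a : ℝ) :
    ∫ b in (3 * a)..(π / 2), g2f (2 * a) (2 * b) =
      sin (2 * a) * g2InnerPoly (cos (2 * a)) / 8 := by
  have hF : ∀ c d u : ℝ, HasDerivAt (fun u => c * d * u - (c + d) * u ^ 2 / 2 + u ^ 3 / 3)
      ((c - u) * (d - u)) u := by
    intro c d u
    refine ((((hasDerivAt_id u).const_mul (c * d)).sub
      (((hasDerivAt_pow 2 u).const_mul (c + d)).div_const 2)).add
      ((hasDerivAt_pow 3 u).div_const 3)).congr_deriv ?_
    norm_num
    ring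
  simp only [g2f_two_mul, intervalIntegral.integral_const_mul]
  rw [integral_sin_two_mul_mul_comp_cos_two_mul (hF _ _) (by fun_prop), mul_left_comm 2 3 a,
    show 6 * a = 3 * (2 * a) by ring, cos_three_mul, show 2 * (π / 2) = π by ring, cos_pi,
    g2InnerPoly]
  ring

theorem integral_integral_g2f_two_mul :
    ∫ a in (0 : ℝ)..(π / 6), ∫ b in (3 * a)..(π / 2), g2f (2 * a) (2 * b) = 1 / 60 := by
  have hH : ∀ u : ℝ, HasDerivAt (fun c : ℝ => c / 3 - c ^ 2 / 2 - c ^ 3 + 11 * c ^ 4 / 4 +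
      4 * c ^ 5 / 5 - 5 * c ^ 6 + 4 * c ^ 8 - 16 * c ^ 10 / 15) (g2InnerPoly u) u := by
    intro u
    have h : ∀ n : ℕ, HasDerivAt (fun c : ℝ => c ^ n) (n * u ^ (n - 1)) u :=
      fun n => hasDerivAt_pow n u
    refine (((((((((hasDerivAt_id u).div_const 3).sub ((h 2).div_const 2)).sub (h 3)).add
      (((h 4).const_mul 11).div_const 4)).add (((h 5).const_mul 4).div_const 5)).sub
      ((h 6).const_mul 5)).add ((h 8).const_mul 4)).sub
      (((h 10).const_mul 16).div_const 15)).congr_deriv ?_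
    norm_num [g2InnerPoly]
    ring
  simp only [integral_g2f_two_mul_right, intervalIntegral.integral_div]
  rw [integral_sin_two_mul_mul_comp_cos_two_mul hH (by unfold g2InnerPoly; fun_prop),
    show 2 * (π / 6) = π / 3 by ring, cos_pi_div_three, mul_zero, cos_zero]
  norm_num

/-- The total Haar volume of the compact Lie group `G₂`,
computed as a 14-fold iterated integral in the `SO(4)`-Euler parametrization,
equals `9√3·π⁸/20`. -/
theorem g2_volume :
    (∫ x₁ in (0:ℝ)..(2 * π), ∫ x₂ in (0:ℝ)..(π / 4), ∫ x₃ in (0:ℝ)..π,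
      ∫ x₄ in (0:ℝ)..π, ∫ x₅ in (0:ℝ)..(π / 2), ∫ x₆ in (0:ℝ)..(π / 2),
      ∫ x₇ in (0:ℝ)..(π / 6), ∫ x₈ in (3 * x₇)..(π / 2),
      ∫ x₉ in (0:ℝ)..(2 * π), ∫ x₁₀ in (0:ℝ)..(π / 2), ∫ x₁₁ in (0:ℝ)..π,
      ∫ x₁₂ in (0:ℝ)..π, ∫ x₁₃ in (0:ℝ)..(π / 2), ∫ x₁₄ in (0:ℝ)..π,
        27 * Real.sqrt 3 * g2f (2 * x₇) (2 * x₈) *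
          sin (2 * x₂) * sin (2 * x₅) * sin (2 * x₁₀) * sin (2 * x₁₃)) =
      9 * Real.sqrt 3 * π ^ 8 / 20 := by
  have h_half : ∫ x in (0 : ℝ)..(π / 2), sin (2 * x) = 1 := by
    rw [integral_sin_two_mul, show 2 * (π / 2) = π by ring, cos_pi]
    norm_num
  have h_quarter : ∫ x in (0 : ℝ)..(π / 4), sin (2 * x) = 1 / 2 := by
    rw [integral_sin_two_mul, show 2 * (π / 4) = π / 2 by ring, cos_pi_div_two]
    norm_num
  have h_factor : ∀ g s₂ s₅ s₁₀ s₁₃ : ℝ, 27 * √3 * g * s₂ * s₅ * s₁₀ * s₁₃ =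
      s₁₃ * (s₁₀ * (s₅ * (s₂ * (27 * √3 * g)))) := by
    intros
    ring
  simp only [h_factor, intervalIntegral.integral_const, intervalIntegral.integral_const_mul,
    intervalIntegral.integral_mul_const, smul_eq_mul, h_half, h_quarter,
    integral_integral_g2f_two_mul, sub_zero, one_mul]
  ring
end

section
/- The volume of the compact Lie group F₄, computed as the 52-fold iterated integral of the Haar measure density in the Spin(9)-Euler parametrization, equals 2²⁶·π²⁸/(3⁷·5⁴·7²·11). Concretely: let D(x₁,…,x₁₆) = 2⁷·cos⁷(x₁₆/2)·sin¹⁵(x₁₆/2)·sin x₄·cos x₅·cos x₆·sin²x₆·cos⁴x₇·sin²x₇·sin⁷x₈·sin x₁₂·cos x₁₃·cos x₁₄·sin²x₁₄·cos²x₁₅·sin⁴x₁₅ and let S(y₁,…,y₃₆) = sin y₄·cos y₅·cos y₆·sin²y₆·cos⁴y₇·sin²y₇·sin⁷y₈·sin y₁₂·cos y₁₃·cos y₁₄·sin²y₁₄·cos²y₁₅·sin⁴y₁₅·sin y₁₇·cos²y₁₈·cos³y₁₉·cos⁴y₂₀·sin⁵y₂₁·sin y₂₃·cos²y₂₄·cos³y₂₅·sin⁴y₂₆·sin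 y₂₈·cos²y₂₉·sin³y₃₀·sin y₃₂·sin²y₃₃·sin y₃₅. Then (∫ D over the region x₁,x₂,x₃ ∈ [0,2π], x₄ ∈ [0,π], x₅ ∈ [−π/2,π/2], x₆,x₇ ∈ [0,π/2], x₈ ∈ [0,π], x₉,x₁₀,x₁₁ ∈ [0,2π], x₁₂ ∈ [0,π], x₁₃ ∈ [−π/2,π/2], x₁₄,x₁₅ ∈ [0,π/2], x₁₆ ∈ [0,π]) × (∫ S over the region yᵢ ∈ [0,2π] for i ∈ {1,2,3,9,10,11,16,22,27,31,34}, yᵢ ∈ [0,π] for i ∈ {4,8,12,17,21,23,26,28,30,32,33,35}, yᵢ ∈ [−π/2,π/2] for i ∈ {5,13,18,19,20,24,25,29}, yᵢ ∈ [0,π/2] for i ∈ {6,7,14,15}, and y₃₆ ∈ [0,4π]) = 2²⁶·π²⁸/(3⁷·5⁴·7²·11). -/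
/-!
Both densities are products of one-variable factors and the boxes are products of intervals,
so each iterated integral splits into a product of one-dimensional integrals. These are Wallis
integrals `∫₀^π sinⁿ` (the `cos`-factors on `[-π/2, π/2]` become `sin`-factors after the shift
by `π/2`), the integrals `∫₀^{π/2} cosᵖ sin² = (∫₀^{π/2} cosᵖ)/(p + 2)`, and, for the half-angle
factor, a polynomial integral after the substitution `u = sin (x/2)`. The coset integral is
`2⁹π⁸/(3³·5²·7·11)` and the `Spin(9)` integral is `2¹⁷π²⁰/(3⁴·5²·7)`.
-/

open Real intervalIntegral

theorem intervalIntegral.integral_mul_mul_const {a b : ℝ} (f g : ℝ → ℝ) (c : ℝ) :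
    ∫ x in a..b, f x * (g x * c) = (∫ x in a..b, f x * g x) * c := by
  simp only [← mul_assoc, integral_mul_const]

theorem integral_cos_mul_sin_pow {a b : ℝ} (n : ℕ) :
    ∫ x in a..b, cos x * sin x ^ n = (sin b ^ (n + 1) - sin a ^ (n + 1)) / (n + 1) := by
  simpa [mul_comm (cos _)] using integral_sin_pow_mul_cos_pow_odd (a := a) (b := b) n 0

theorem integral_sin_pow_add_two_zero_pi (n : ℕ) :
    ∫ x in (0:ℝ)..π, sin x ^ (n + 2) = (n + 1) / (n + 2) * ∫ x in (0:ℝ)..π, sin x ^ n := by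
  simp [integral_sin_pow]

theorem integral_cos_pow_add_two_zero_pi_div_two (n : ℕ) :
    ∫ x in (0:ℝ)..π / 2, cos x ^ (n + 2) =
      (n + 1) / (n + 2) * ∫ x in (0:ℝ)..π / 2, cos x ^ n := by
  simp [integral_cos_pow]

theorem integral_cos_pow_neg_pi_div_two_pi_div_two (n : ℕ) :
    ∫ x in -(π / 2)..(π / 2), cos x ^ n = ∫ x in (0:ℝ)..π, sin x ^ n := by
  simpa [← sin_add_pi_div_two, add_halves] using
    integral_comp_add_right (fun x => sin x ^ n) (π / 2) (a := -(π / 2)) (b := π / 2)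

theorem integral_cos_pow_mul_sin_pow_comm (m n : ℕ) :
    ∫ x in (0:ℝ)..π / 2, cos x ^ m * sin x ^ n = ∫ x in (0:ℝ)..π / 2, cos x ^ n * sin x ^ m := by
  simpa [cos_pi_div_two_sub, sin_pi_div_two_sub, mul_comm] using
    (integral_comp_sub_left (fun x => cos x ^ m * sin x ^ n) (π / 2) (a := 0) (b := π / 2)).symm

theorem integral_cos_pow_mul_sin_sq_zero_pi_div_two (n : ℕ) :
    ∫ x in (0:ℝ)..π / 2, cos x ^ n * sin x ^ 2 = (∫ x in (0:ℝ)..π / 2, cos x ^ n) / (n + 2) := by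
  have h (x : ℝ) : cos x ^ n * sin x ^ 2 = cos x ^ n - cos x ^ (n + 2) := by
    rw [sin_sq]; ring
  simp only [h]
  rw [integral_sub, integral_cos_pow_add_two_zero_pi_div_two]
  · field_simp
    ring
  all_goals exact Continuous.intervalIntegrable (by fun_prop) _ _

theorem integral_cos_half_pow_odd_mul_sin_half_pow (m n : ℕ) :
    ∫ x in (0:ℝ)..π, cos (x / 2) ^ (2 * n + 1) * sin (x / 2) ^ m =
      2 * ∫ u in (0:ℝ)..1, u ^ m * (1 - u ^ 2) ^ n := by
  rw [integral_comp_div (fun x => cos x ^ (2 * n + 1) * sin x ^ m) two_ne_zero]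
  simp [mul_comm (cos _ ^ _), integral_sin_pow_mul_cos_pow_odd]

theorem integral_cos_half_pow_seven_mul_sin_half_pow_fifteen :
    ∫ x in (0:ℝ)..π, cos (x / 2) ^ 7 * sin (x / 2) ^ 15 = 1 / 1320 := by
  have h (u : ℝ) : u ^ 15 * (1 - u ^ 2) ^ 3 = u ^ 15 - 3 * u ^ 17 + 3 * u ^ 19 - u ^ 21 := by ring
  rw [integral_cos_half_pow_odd_mul_sin_half_pow 15 3]
  simp only [h]
  rw [integral_sub, integral_add, integral_sub, integral_const_mul, integral_const_mul]
  · norm_num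
  all_goals exact Continuous.intervalIntegrable (by fun_prop) _ _

/-- The total Haar volume of the compact Lie group `F₄` in the
`Spin(9)`-Euler parametrization: the product of the 16-fold integral of the coset
density `D` and the 36-fold integral of the `Spin(9)` Haar density `S` equals
`2²⁶·π²⁸/(3⁷·5⁴·7²·11)`. -/
theorem f4_volume :
    (∫ x1 in (0:ℝ)..(2 * π), ∫ x2 in (0:ℝ)..(2 * π), ∫ x3 in (0:ℝ)..(2 * π), ∫ x4 in (0:ℝ)..π, ∫ x5 in (-(π / 2))..(π / 2), ∫ x6 in (0:ℝ)..(π / 2), ∫ x7 in (0:ℝ)..(π / 2), ∫ x8 in (0:ℝ)..π, ∫ x9 in (0:ℝ)..(2 * π), ∫ x10 in (0:ℝ)..(2 * π), ∫ x11 in (0:ℝ)..(2 * π), ∫ x12 in (0:ℝ)..π, ∫ x13 in (-(π / 2))..(π / 2), ∫ x14 in (0:ℝ)..(π / 2), ∫ x15 in (0:ℝ)..(π / 2), ∫ x16 in (0:ℝ)..π, 2 ^ 7 * cos (x16 / 2) ^ 7 * sin (x16 / 2) ^ 15 * sin x4 * cos x5 * cos x6 * sin x6 ^ 2 * cos x7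 ^ 4 * sin x7 ^ 2 * sin x8 ^ 7 * sin x12 * cos x13 * cos x14 * sin x14 ^ 2 * cos x15 ^ 2 * sin x15 ^ 4) *
      (∫ y1 in (0:ℝ)..(2 * π), ∫ y2 in (0:ℝ)..(2 * π), ∫ y3 in (0:ℝ)..(2 * π), ∫ y4 in (0:ℝ)..π, ∫ y5 in (-(π / 2))..(π / 2), ∫ y6 in (0:ℝ)..(π / 2), ∫ y7 in (0:ℝ)..(π / 2), ∫ y8 in (0:ℝ)..π, ∫ y9 in (0:ℝ)..(2 * π), ∫ y10 in (0:ℝ)..(2 * π), ∫ y11 in (0:ℝ)..(2 * π), ∫ y12 in (0:ℝ)..π, ∫ y13 in (-(π / 2))..(π / 2), ∫ y14 in (0:ℝ)..(π / 2), ∫ y15 in (0:ℝ)..(π / 2), ∫ y16 in (0:ℝ)..(2 * π), ∫ y17 in (0:ℝ)..π, ∫ y18 in (-(π / 2))..(π / 2), ∫ y19 in (-(π / 2))..(π / 2), ∫ y20 in (-(π / 2))..(π / 2), ∫ y21 in (0:ℝ)..π, ∫ y22 in (0:ℝ)..(2 * π), ∫ y23 in (0:ℝ)..π, ∫ y24 in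 (-(π / 2))..(π / 2), ∫ y25 in (-(π / 2))..(π / 2), ∫ y26 in (0:ℝ)..π, ∫ y27 in (0:ℝ)..(2 * π), ∫ y28 in (0:ℝ)..π, ∫ y29 in (-(π / 2))..(π / 2), ∫ y30 in (0:ℝ)..π, ∫ y31 in (0:ℝ)..(2 * π), ∫ y32 in (0:ℝ)..π, ∫ y33 in (0:ℝ)..π, ∫ y34 in (0:ℝ)..(2 * π), ∫ y35 in (0:ℝ)..π, ∫ y36 in (0:ℝ)..(4 * π), sin y4 * cos y5 * cos y6 * sin y6 ^ 2 * cos y7 ^ 4 * sin y7 ^ 2 * sin y8 ^ 7 * sin y12 * cos y13 * cos y14 * sin y14 ^ 2 * cos y15 ^ 2 * sin y15 ^ 4 * sin y17 * cos y18 ^ 2 * cos y19 ^ 3 * cos y20 ^ 4 * sin y21 ^ 5 * sin y23 * cos y24 ^ 2 * cos y25 ^ 3 * sin y26 ^ 4 * sin y28 * cos y29 ^ 2 * sin y30 ^ 3 * sin y32 * sin y33 ^ 2 * sin y35) =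
      2 ^ 26 * π ^ 28 / (3 ^ 7 * 5 ^ 4 * 7 ^ 2 * 11) := by
  simp only [mul_assoc, integral_const_mul, integral_mul_const, integral_mul_mul_const,
    integral_const, smul_eq_mul, sub_zero]
  norm_num [integral_cos_half_pow_seven_mul_sin_half_pow_fifteen, integral_cos_mul_sin_pow,
    integral_cos_pow_mul_sin_pow_comm 2 4, integral_cos_pow_mul_sin_sq_zero_pi_div_two,
    integral_cos_pow_add_two_zero_pi_div_two, integral_cos_pow_neg_pi_div_two_pi_div_two,
    integral_sin_pow_add_two_zero_pi]
  ring
end
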